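/- Let p be a real univariate polynomial of degree n with nonzero leading coefficient, with complex roots x₁,…,xₙ (with multiplicity), and let m_j = Σᵢ xᵢ^j (which are real numbers). Then p is real-rooted if and only if the n×n Hankel moment matrix M with entries M_{k,l} = m_{k+l−2} (1 ≤ k,l ≤ n) is positive semidefinite. -/

import Mathlib

/-!
For a real vector `a` with polynomial `q = ∑ₖ aₖ Xᵏ`, the Hankel form is `aᵀ M a = ∑ᵢ q(xᵢ)²`.
If all roots are real this is a sum of real squares. Otherwise the distinct roots form a
conjugation-closed set of at most `n` points containing some non-real `z`; interpolation on it gives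
a real `q` of degree `< n` with `q(z) = i`, hence `q(z̄) = -i`, vanishing at all other roots, and
then `∑ᵢ q(xᵢ)²` is minus the number of roots equal to `z` or `z̄`.
-/

open Polynomial Finset Matrix ComplexConjugate

section Hankel

variable {ι : Type*} [Fintype ι] {n : ℕ}

theorem isHermitian_hankel (m : ℕ → ℝ) :
    (Matrix.of fun k l : Fin n => m ((k : ℕ) + (l : ℕ))).IsHermitian := by
  ext k l
  simp [add_comm]

theorem hankel_dotProduct_mulVec_eq (x : ι → ℂ) (m : ℕ → ℝ) (hm : ∀ j, (m j : ℂ) = ∑ i, x i ^ j)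
    (a : Fin n → ℝ) :
    ((a ⬝ᵥ (Matrix.of fun k l : Fin n => m ((k : ℕ) + (l : ℕ))) *ᵥ a : ℝ) : ℂ) =
      ∑ i, (∑ k, (a k : ℂ) * x i ^ (k : ℕ)) ^ 2 := by
  simp only [dotProduct, mulVec, of_apply, Complex.ofReal_sum, Complex.ofReal_mul, hm,
    mul_sum, sq, sum_mul]
  conv_lhs => enter [2, k]; rw [sum_comm]
  rw [sum_comm]
  exact sum_congr rfl fun i _ => sum_congr rfl fun k _ => sum_congr rfl fun l _ => by ring

theorem posSemidef_hankel_of_forall_im_eq_zero (x : ι → ℂ) (m : ℕ → ℝ)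
    (hm : ∀ j, (m j : ℂ) = ∑ i, x i ^ j) (hx : ∀ i, (x i).im = 0) :
    (Matrix.of fun k l : Fin n => m ((k : ℕ) + (l : ℕ))).PosSemidef := by
  refine PosSemidef.of_dotProduct_mulVec_nonneg (isHermitian_hankel m) fun a => ?_
  have hform := hankel_dotProduct_mulVec_eq x m hm a
  obtain ⟨y, rfl⟩ : ∃ y : ι → ℝ, (fun i => (y i : ℂ)) = x :=
    ⟨fun i => (x i).re, funext fun i => Complex.ext rfl (by simp [hx i])⟩
  dsimp only at hform
  norm_cast at hform
  rw [star_trivial, hform]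
  positivity

theorem hankel_dotProduct_mulVec_coeff_eq (x : ι → ℂ) (m : ℕ → ℝ)
    (hm : ∀ j, (m j : ℂ) = ∑ i, x i ^ j) {q : ℝ[X]} (hq : q.natDegree < n) :
    (((fun k : Fin n => q.coeff k) ⬝ᵥ
        (Matrix.of fun k l : Fin n => m ((k : ℕ) + (l : ℕ))) *ᵥ fun k => q.coeff k : ℝ) : ℂ) =
      ∑ i, aeval (x i) q ^ 2 := by
  rw [hankel_dotProduct_mulVec_eq x m hm]
  simp only [aeval_eq_sum_range' hq, Algebra.smul_def, Complex.coe_algebraMap]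
  refine sum_congr rfl fun i _ => ?_
  rw [Fin.sum_univ_eq_sum_range (fun k => (q.coeff k : ℂ) * x i ^ k)]

theorem not_posSemidef_hankel_of_re_sum_neg (x : ι → ℂ) (m : ℕ → ℝ)
    (hm : ∀ j, (m j : ℂ) = ∑ i, x i ^ j) {q : ℝ[X]} (hq : q.natDegree < n)
    (hneg : (∑ i, aeval (x i) q ^ 2).re < 0) :
    ¬(Matrix.of fun k l : Fin n => m ((k : ℕ) + (l : ℕ))).PosSemidef := fun hpsd => by
  have hform := congrArg Complex.re (hankel_dotProduct_mulVec_coeff_eq x m hm hq)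
  rw [Complex.ofReal_re] at hform
  have := hpsd.dotProduct_mulVec_nonneg fun k => q.coeff k
  rw [star_trivial] at this
  linarith

end Hankel

section Roots

variable {ι : Type*} [Fintype ι] {p : ℝ[X]} {x : ι → ℂ}

theorem aeval_eq_zero_iff_exists_eq (hp : p ≠ 0)
    (hroots : p.map (algebraMap ℝ ℂ) = C (p.leadingCoeff : ℂ) * ∏ i, (X - C (x i))) (w : ℂ) :
    aeval w p = 0 ↔ ∃ i, x i = w := by
  rw [← eval_map_algebraMap, hroots, eval_mul, eval_C, eval_prod, mul_eq_zero, prod_eq_zero_iff]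
  simp only [Complex.ofReal_eq_zero, leadingCoeff_eq_zero, hp, false_or, mem_univ, true_and,
    eval_sub, eval_X, eval_C, sub_eq_zero]
  exact exists_congr fun i => eq_comm

theorem exists_eq_conj_of_map_eq_prod (hp : p ≠ 0)
    (hroots : p.map (algebraMap ℝ ℂ) = C (p.leadingCoeff : ℂ) * ∏ i, (X - C (x i))) (i : ι) :
    ∃ j, x j = conj (x i) := by
  rw [← aeval_eq_zero_iff_exists_eq hp hroots, aeval_conj,
    (aeval_eq_zero_iff_exists_eq hp hroots _).2 ⟨i, rfl⟩, map_zero]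

end Roots

theorem exists_aeval_eq_eval_add_conj_eval_conj (Q : ℂ[X]) :
    ∃ q : ℝ[X], q.natDegree ≤ Q.natDegree ∧
      ∀ w, aeval w q = Q.eval w + conj (Q.eval (conj w)) := by
  have hlifts : Q + Q.map (starRingEnd ℂ) ∈ lifts (algebraMap ℝ ℂ) := by
    rw [lifts_iff_coeff_lifts]
    exact fun k => ⟨2 * (Q.coeff k).re, by simp [coeff_map, Complex.add_conj]⟩
  obtain ⟨q, hmap, hdeg⟩ := exists_natDegree_eq_of_mem_lifts hlifts
  refine ⟨q, hdeg ▸ (natDegree_add_le _ _).trans (by rw [natDegree_map, max_self]), fun w => ?_⟩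
  rw [← eval_map_algebraMap, hmap, eval_add, eval_map, ← eval₂_hom, Complex.conj_conj]

theorem exists_aeval_eq_I_of_conj_mem {S : Finset ℂ} (hS : ∀ w ∈ S, conj w ∈ S) {z : ℂ}
    (hz : z ∈ S) (hzz : conj z ≠ z) :
    ∃ q : ℝ[X], q.natDegree < #S ∧ aeval z q = Complex.I ∧
      ∀ w ∈ S, w ≠ z → w ≠ conj z → aeval w q = 0 := by
  set Q := C Complex.I * Lagrange.basis S id z
  have hQz : Q.eval z = Complex.I := by
    simpa [Q] using Lagrange.eval_basis_self (v := id) (Set.injOn_id _) hz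
  have hQ0 : ∀ w ∈ S, w ≠ z → Q.eval w = 0 := fun w hw hwz => by
    simpa [Q] using Lagrange.eval_basis_of_ne (v := id) hwz.symm hw
  obtain ⟨q, hdeg, hq⟩ := exists_aeval_eq_eval_add_conj_eval_conj Q
  refine ⟨q, hdeg.trans_lt ?_, ?_, fun w hw hwz hwz' => ?_⟩
  · refine (natDegree_C_mul_le _ _).trans_lt ?_
    rw [Lagrange.natDegree_basis (Set.injOn_id _) hz]
    exact Nat.sub_lt (card_pos.2 ⟨z, hz⟩) one_pos
  · rw [hq, hQz, hQ0 _ (hS z hz) hzz, map_zero, add_zero]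
  · rw [hq, hQ0 w hw hwz, hQ0 _ (hS w hw) (fun h => hwz' (by rw [← h, Complex.conj_conj])),
      map_zero, add_zero]

theorem stmt8_general (n : ℕ) (p : Polynomial ℝ) (hp : p ≠ 0)
    (x : Fin n → ℂ)
    (hroots : p.map (algebraMap ℝ ℂ) =
      Polynomial.C ((p.leadingCoeff : ℂ)) * ∏ i, (Polynomial.X - Polynomial.C (x i)))
    (m : ℕ → ℝ) (hm : ∀ j, ((m j : ℂ)) = ∑ i, x i ^ j) :
    (∀ i, (x i).im = 0) ↔
      (Matrix.of fun k l : Fin n => m ((k : ℕ) + (l : ℕ))).PosSemidef := by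
  refine ⟨posSemidef_hankel_of_forall_im_eq_zero x m hm, fun hpsd => ?_⟩
  by_contra! ⟨i₀, hi₀⟩
  have hS : ∀ w ∈ univ.image x, conj w ∈ univ.image x := by
    simp only [mem_image, mem_univ, true_and, forall_exists_index, forall_apply_eq_imp_iff]
    exact exists_eq_conj_of_map_eq_prod hp hroots
  obtain ⟨q, hqS, hqz, hq0⟩ := exists_aeval_eq_I_of_conj_mem hS
    (mem_image_of_mem x (mem_univ i₀)) (mt Complex.conj_eq_iff_im.1 hi₀)
  have hqn : q.natDegree < n := hqS.trans_le (card_image_le.trans_eq (card_fin n))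
  have hterm : ∀ i, aeval (x i) q ^ 2 = -1 ∨ aeval (x i) q = 0 := by
    intro i
    by_cases h₁ : x i = x i₀
    · rw [h₁, hqz, Complex.I_sq]; exact Or.inl rfl
    by_cases h₂ : x i = conj (x i₀)
    · rw [h₂, aeval_conj, hqz, Complex.conj_I, neg_sq, Complex.I_sq]; exact Or.inl rfl
    exact Or.inr (hq0 _ (mem_image_of_mem x (mem_univ i)) h₁ h₂)
  refine not_posSemidef_hankel_of_re_sum_neg x m hm hqn ?_ hpsd
  rw [Complex.re_sum]
  refine (sum_lt_sum (fun i _ => ?_) ⟨i₀, mem_univ _, ?_⟩).trans_eq sum_const_zero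
  · rcases hterm i with h | h <;> simp [h]
  · simp [hqz]

/-- (Sylvester) A real polynomial of degree `n` with nonzero leading coefficient, complex
roots `x₁, …, xₙ` (with multiplicity) and real power sums `m_j = Σᵢ xᵢ^j`, is real-rooted
iff the `n × n` Hankel moment matrix `(m_{k+l-2})_{k,l}` is positive semidefinite. -/
theorem stmt8 (n : ℕ) (p : Polynomial ℝ) (hdeg : p.natDegree = n) (hp : p ≠ 0)
    (x : Fin n → ℂ)
    (hroots : p.map (algebraMap ℝ ℂ) =
      Polynomial.C ((p.leadingCoeff : ℂ)) * ∏ i, (Polynomial.X - Polynomial.C (x i)))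
    (m : ℕ → ℝ) (hm : ∀ j, ((m j : ℂ)) = ∑ i, x i ^ j) :
    (∀ i, (x i).im = 0) ↔
      (Matrix.of fun k l : Fin n => m ((k : ℕ) + (l : ℕ))).PosSemidef :=
  stmt8_general n p hp x hroots m hm
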